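/- arXiv:1909.01250 — 4 statements merged into one kernel-verified Lean document; each statement's English description precedes it below -/
import Mathlib

section
/- Let d ≥ 1 and let g : ℝ^d × ℝ^d → ℝ be continuous, ℤ^d-periodic in its second argument, and such that there is a compact set K ⊂ ℝ^d with g(x,y) = 0 whenever x ∉ K. Then lim_{ε→0⁺} ∫_{ℝ^d} g(x, x/ε) dx = ∫_{ℝ^d} ∫_{[0,1]^d} g(x,y) dy dx. -/
/-!
Average over the translates `x ↦ x + ε t`, `t ∈ [0,1]^d`. By translation invariance,
`∫ g(x, x/ε) dx = ∫_{[0,1]^d} ∫ g(x + ε t, x/ε + t) dx dt`, while by Fubini and periodicity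
`∫_{[0,1]^d} ∫ g(x, x/ε + t) dx dt = ∫ ∫_{[0,1]^d} g(x, y) dy dx` exactly, for every `ε`.
The difference of the two integrands tends to `0` pointwise, because periodicity reduces `y`
to the compact cube, so that `g(·, y)` is continuous uniformly in `y`; it is dominated by a
constant on `[0,1]^d × (1-neighbourhood of K)`, and dominated convergence concludes.
-/

open MeasureTheory Filter Set Function Topology

theorem TendstoUniformly.tendsto_sub_comp {α β γ G : Type*} [AddGroup G] [UniformSpace G]
    [IsUniformAddGroup G] {F : α → β → G} {f : β → G} {p : Filter α}
    (h : TendstoUniformly F f p) {l : Filter γ} {a : γ → α} (ha : Tendsto a l p) (b : γ → β) :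
    Tendsto (fun n => F (a n) (b n) - f (b n)) l (𝓝 0) := by
  have := (tendstoUniformly_iff_tendsto.1 h).comp (ha.prodMk (tendsto_top (f := b)))
  rwa [uniformity_eq_comap_nhds_zero G, tendsto_comap_iff] at this

section Periodic

variable {ι : Type*}

theorem fract_mem_Icc (y : ι → ℝ) : (fun i => Int.fract (y i)) ∈ Icc (0 : ι → ℝ) 1 :=
  ⟨fun i => Int.fract_nonneg (y i), fun i => (Int.fract_lt_one (y i)).le⟩

theorem apply_fract_of_periodic {α : Type*} {f : (ι → ℝ) → α}
    (hf : ∀ k : ι → ℤ, Periodic f fun i => (k i : ℝ)) (y : ι → ℝ) :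
    f (fun i => Int.fract (y i)) = f y := by
  rw [← hf (fun i => ⌊y i⌋)]
  congr 1
  ext i
  exact Int.fract_add_floor (y i)

variable {E : Type*} [NormedAddCommGroup E] {g : (ι → ℝ) → (ι → ℝ) → E}

theorem exists_norm_le_of_periodic (hg : Continuous (uncurry g))
    (hper : ∀ x (k : ι → ℤ), Periodic (g x) fun i => (k i : ℝ))
    {K : Set (ι → ℝ)} (hK : IsCompact K) (hsupp : ∀ x ∉ K, ∀ y, g x y = 0) :
    ∃ C, ∀ x y, ‖g x y‖ ≤ C := by
  obtain ⟨C, hC⟩ := (hK.prod isCompact_Icc).exists_bound_of_continuousOn hg.continuousOn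
  refine ⟨max C 0, fun x y => ?_⟩
  by_cases hx : x ∈ K
  · rw [← apply_fract_of_periodic (hper x)]
    exact (hC (x, _) ⟨hx, fract_mem_Icc y⟩).trans (le_max_left _ _)
  · simp [hsupp x hx]

variable [Fintype ι]

theorem tendstoUniformly_nhds_of_periodic (hg : Continuous (uncurry g))
    (hper : ∀ x (k : ι → ℤ), Periodic (g x) fun i => (k i : ℝ)) (x : ι → ℝ) :
    TendstoUniformly g (g x) (𝓝 x) := by
  have := (Continuous.tendstoUniformly (fun x' (q : Icc (0 : ι → ℝ) 1) => g x' q)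
    (by fun_prop) x).comp fun y => ⟨_, fract_mem_Icc y⟩
  simpa [comp_def, apply_fract_of_periodic (hper _)] using this

theorem mem_span_int_basisFun_iff {γ : ι → ℝ} :
    γ ∈ Submodule.span ℤ (range (Pi.basisFun ℝ ι)) ↔ ∃ k : ι → ℤ, (fun i => (k i : ℝ)) = γ := by
  rw [Module.Basis.mem_span_iff_repr_mem]
  simp [Classical.skolem, funext_iff, eq_comm]

theorem setIntegral_Icc_add_of_periodic [NormedSpace ℝ E] {f : (ι → ℝ) → E}
    (hf : ∀ k : ι → ℤ, Periodic f fun i => (k i : ℝ)) (c : ι → ℝ) :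
    ∫ t in Icc 0 1, f (c + t) = ∫ t in Icc 0 1, f t := by
  have hfd := ZSpan.isAddFundamentalDomain' (Pi.basisFun ℝ ι) volume
  rw [ZSpan.fundamentalDomain_pi_basisFun] at hfd
  have hIco : (univ.pi fun _ => Ico (0 : ℝ) 1) =ᵐ[volume] Icc (0 : ι → ℝ) 1 :=
    Measure.univ_pi_Ico_ae_eq_Icc
  rw [← Measure.restrict_congr_set hIco,
    ← (measurePreserving_add_left volume c).setIntegral_image_emb (measurableEmbedding_addLeft c)]
  have : Countable (Submodule.span ℤ (range (Pi.basisFun ℝ ι))).toAddSubgroup :=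
    inferInstanceAs (Countable (Submodule.span ℤ (range (Pi.basisFun ℝ ι))))
  refine (hfd.vadd_of_comm c).setIntegral_eq hfd fun ⟨γ, hγ⟩ y => ?_
  obtain ⟨k, rfl⟩ := mem_span_int_basisFun_iff.1 hγ
  simpa [add_comm] using hf k y

end Periodic

section Integrals

variable {ι : Type*} [Fintype ι]

theorem mem_cthickening_of_add_smul_mem {K : Set (ι → ℝ)} {x t : ι → ℝ} (ht : t ∈ Icc 0 1)
    {ε : ℝ} (h : x + ε • t ∈ K) : x ∈ Metric.cthickening |ε| K := by
  refine Metric.mem_cthickening_of_dist_le x _ _ _ h ?_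
  rw [dist_self_add_right, norm_smul, Real.norm_eq_abs]
  refine mul_le_of_le_one_right (abs_nonneg ε)
    ((pi_norm_le_iff_of_nonneg zero_le_one).2 fun i => ?_)
  rw [Real.norm_of_nonneg (ht.1 i)]
  exact ht.2 i

theorem volume_real_Icc_zero_one : volume.real (Icc (0 : ι → ℝ) 1) = 1 := by
  simp [measureReal_def, Real.volume_Icc_pi_toReal zero_le_one]

variable {E : Type*} [NormedAddCommGroup E] {g : (ι → ℝ) → (ι → ℝ) → E} {K : Set (ι → ℝ)}

theorem Continuous.integrable_restrict_prod {F : (ι → ℝ) × (ι → ℝ) → E} (hF : Continuous F)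
    {s t : Set (ι → ℝ)} (hs : IsCompact s) (ht : IsCompact t)
    (hzero : ∀ x ∈ s, ∀ y ∉ t, F (x, y) = 0) :
    Integrable F ((volume.restrict s).prod volume) := by
  rw [Measure.restrict_prod_eq_prod_univ, ← Measure.volume_eq_prod]
  exact (hF.continuousOn.integrableOn_compact (hs.prod ht)).of_forall_sdiff_eq_zero
    (hs.measurableSet.prod MeasurableSet.univ)
    fun p hp => hzero p.1 hp.1.1 p.2 fun h => hp.2 ⟨hp.1.1, h⟩

theorem integrable_Icc_prod_apply_add_smul (hg : Continuous (uncurry g)) (hK : IsCompact K)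
    (hsupp : ∀ x ∉ K, ∀ y, g x y = 0) (ε c : ℝ) :
    Integrable (fun p : (ι → ℝ) × (ι → ℝ) => g (p.2 + ε • p.1) (c • p.2 + p.1))
      ((volume.restrict (Icc 0 1)).prod volume) :=
  (by fun_prop : Continuous _).integrable_restrict_prod isCompact_Icc hK.cthickening
    fun _ ht _ hx => hsupp _ (fun h => hx (mem_cthickening_of_add_smul_mem ht h)) _

theorem integrable_Icc_prod_apply_smul_add (hg : Continuous (uncurry g)) (hK : IsCompact K)
    (hsupp : ∀ x ∉ K, ∀ y, g x y = 0) (c : ℝ) :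
    Integrable (fun p : (ι → ℝ) × (ι → ℝ) => g p.2 (c • p.2 + p.1))
      ((volume.restrict (Icc 0 1)).prod volume) :=
  (by fun_prop : Continuous _).integrable_restrict_prod isCompact_Icc hK
    fun _ _ x hx => hsupp x hx _

theorem norm_sub_apply_add_smul_le_indicator {C : ℝ} (hC : ∀ x y, ‖g x y‖ ≤ C)
    (hsupp : ∀ x ∉ K, ∀ y, g x y = 0) {t : ι → ℝ} (ht : t ∈ Icc 0 1) {ε : ℝ} (hε : |ε| ≤ 1)
    (x y : ι → ℝ) :
    ‖g (x + ε • t) y - g x y‖ ≤ (Metric.cthickening 1 K).indicator (fun _ => 2 * C) x := by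
  by_cases hx : x ∈ Metric.cthickening 1 K
  · rw [indicator_of_mem hx, two_mul]
    exact (norm_sub_le _ _).trans (add_le_add (hC _ _) (hC _ _))
  · have hxt : g (x + ε • t) y = 0 := hsupp _ (fun hxK =>
      hx (Metric.cthickening_mono hε K (mem_cthickening_of_add_smul_mem ht hxK))) _
    rw [indicator_of_notMem hx, hxt, hsupp x (fun hxK => hx (Metric.self_subset_cthickening K hxK)),
      sub_zero, norm_zero]

variable [NormedSpace ℝ E]

theorem integral_Icc_prod_apply_smul_add (hper : ∀ x (k : ι → ℤ), Periodic (g x) fun i => (k i : ℝ))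
    (hg : Continuous (uncurry g)) (hK : IsCompact K) (hsupp : ∀ x ∉ K, ∀ y, g x y = 0) (c : ℝ) :
    ∫ p, g p.2 (c • p.2 + p.1) ∂(volume.restrict (Icc 0 1)).prod volume =
      ∫ x, ∫ t in Icc 0 1, g x t := by
  rw [integral_prod_symm _ (integrable_Icc_prod_apply_smul_add hg hK hsupp c)]
  exact integral_congr_ae (ae_of_all _ fun x => setIntegral_Icc_add_of_periodic (hper x) (c • x))

variable [CompleteSpace E]

theorem integral_Icc_prod_apply_add_smul (hg : Continuous (uncurry g)) (hK : IsCompact K)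
    (hsupp : ∀ x ∉ K, ∀ y, g x y = 0) {ε : ℝ} (hε : ε ≠ 0) :
    ∫ p, g (p.2 + ε • p.1) (ε⁻¹ • p.2 + p.1) ∂(volume.restrict (Icc 0 1)).prod volume =
      ∫ x, g x (ε⁻¹ • x) := by
  have hshift (t : ι → ℝ) : ∫ x, g (x + ε • t) (ε⁻¹ • x + t) = ∫ x, g x (ε⁻¹ • x) := by
    rw [← integral_add_right_eq_self (fun x => g x (ε⁻¹ • x)) (ε • t)]
    simp_rw [smul_add, inv_smul_smul₀ hε]
  rw [integral_prod _ (integrable_Icc_prod_apply_add_smul hg hK hsupp ε ε⁻¹)]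
  simp only [hshift]
  rw [setIntegral_const, volume_real_Icc_zero_one, one_smul]

theorem tendsto_integral_apply_inv_smul (hg : Continuous (uncurry g))
    (hper : ∀ x (k : ι → ℤ), Periodic (g x) fun i => (k i : ℝ))
    (hK : IsCompact K) (hsupp : ∀ x ∉ K, ∀ y, g x y = 0) :
    Tendsto (fun ε : ℝ => ∫ x, g x (ε⁻¹ • x)) (𝓝[>] 0) (𝓝 (∫ x, ∫ y in Icc 0 1, g x y)) := by
  set μ := (volume.restrict (Icc (0 : ι → ℝ) 1)).prod (volume : Measure (ι → ℝ))
  set D : ℝ → (ι → ℝ) × (ι → ℝ) → E := fun ε p =>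
    g (p.2 + ε • p.1) (ε⁻¹ • p.2 + p.1) - g p.2 (ε⁻¹ • p.2 + p.1)
  have hdecomp : ∀ᶠ ε in 𝓝[>] (0 : ℝ),
      (∫ x, ∫ y in Icc 0 1, g x y) + ∫ p, D ε p ∂μ = ∫ x, g x (ε⁻¹ • x) := by
    filter_upwards [self_mem_nhdsWithin] with ε hε
    rw [integral_sub (integrable_Icc_prod_apply_add_smul hg hK hsupp ε ε⁻¹)
      (integrable_Icc_prod_apply_smul_add hg hK hsupp ε⁻¹),
      integral_Icc_prod_apply_add_smul hg hK hsupp (ne_of_gt hε),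
      integral_Icc_prod_apply_smul_add hper hg hK hsupp, add_sub_cancel]
  obtain ⟨C, hC⟩ := exists_norm_le_of_periodic hg hper hK hsupp
  have hbound : ∀ᶠ ε in 𝓝[>] (0 : ℝ), ∀ᵐ p ∂μ,
      ‖D ε p‖ ≤ (Metric.cthickening 1 K).indicator (fun _ => 2 * C) p.2 := by
    filter_upwards [Ioo_mem_nhdsGT one_pos] with ε hε
    filter_upwards [Measure.quasiMeasurePreserving_fst.ae (ae_restrict_mem measurableSet_Icc)]
      with p hp
    exact norm_sub_apply_add_smul_le_indicator hC hsupp hp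
      (abs_le.2 ⟨by linarith [hε.1], hε.2.le⟩) _ _
  have hlim (p : (ι → ℝ) × (ι → ℝ)) : Tendsto (fun ε : ℝ => p.2 + ε • p.1) (𝓝[>] 0) (𝓝 p.2) :=
    tendsto_nhdsWithin_of_tendsto_nhds (by simpa using
      ((continuous_id.smul continuous_const).const_add p.2).tendsto (0 : ℝ))
  have : IsFiniteMeasure (volume.restrict (Icc (0 : ι → ℝ) 1)) :=
    isFiniteMeasure_restrict.2 (isCompact_Icc (a := (0 : ι → ℝ)) (b := 1)).measure_ne_top
  have hsmall : Tendsto (fun ε => ∫ p, D ε p ∂μ) (𝓝[>] 0) (𝓝 0) := by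
    simpa using tendsto_integral_filter_of_dominated_convergence _
      (Eventually.of_forall fun ε => (by fun_prop : Continuous (D ε)).aestronglyMeasurable)
      hbound (((integrable_indicator_iff hK.cthickening.measurableSet).2
        (integrableOn_const hK.cthickening.measure_ne_top)).comp_snd _)
      (ae_of_all _ fun p => (tendstoUniformly_nhds_of_periodic hg hper p.2).tendsto_sub_comp
        (hlim p) fun ε => ε⁻¹ • p.2 + p.1)
  simpa using (hsmall.const_add _).congr' hdecomp

end Integrals

theorem stmt2_general (d : ℕ)
    (g : EuclideanSpace ℝ (Fin d) → EuclideanSpace ℝ (Fin d) → ℝ)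
    (hg_cont : Continuous fun p : EuclideanSpace ℝ (Fin d) × EuclideanSpace ℝ (Fin d) =>
      g p.1 p.2)
    (hg_per : ∀ (x y : EuclideanSpace ℝ (Fin d)) (k : Fin d → ℤ),
      g x (y + (WithLp.equiv 2 (Fin d → ℝ)).symm (fun i => (k i : ℝ))) = g x y)
    (K : Set (EuclideanSpace ℝ (Fin d))) (hK : IsCompact K)
    (hg_supp : ∀ x ∉ K, ∀ y, g x y = 0) :
    Tendsto (fun ε : ℝ => ∫ x, g x (ε⁻¹ • x))
      (nhdsWithin 0 (Set.Ioi 0))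
      (nhds (∫ x, ∫ y in Set.univ.pi fun _ : Fin d => Set.Icc (0 : ℝ) 1, g x (WithLp.toLp 2 y))) := by
  have htoLp := PiLp.volume_preserving_toLp (Fin d)
  have hemb := (MeasurableEquiv.toLp 2 (Fin d → ℝ)).measurableEmbedding
  have hcont : Continuous fun p : (Fin d → ℝ) × (Fin d → ℝ) =>
      g (WithLp.toLp 2 p.1) (WithLp.toLp 2 p.2) :=
    hg_cont.comp (f := fun p : (Fin d → ℝ) × (Fin d → ℝ) => (WithLp.toLp 2 p.1, WithLp.toLp 2 p.2))
      (by fun_prop)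
  have key := tendsto_integral_apply_inv_smul
    (g := fun x y => g (WithLp.toLp 2 x) (WithLp.toLp 2 y)) hcont (fun x k y => hg_per _ _ k)
    (hK.image (PiLp.continuous_ofLp 2 _)) fun x hx y => hg_supp _ (fun h => hx ⟨_, h, rfl⟩) _
  simp_rw [← htoLp.integral_comp hemb, ← WithLp.toLp_smul]
  simpa [← pi_univ_Icc] using key

/-- two-variable periodic averaging lemma. -/
theorem stmt2 (d : ℕ) (hd : 1 ≤ d)
    (g : EuclideanSpace ℝ (Fin d) → EuclideanSpace ℝ (Fin d) → ℝ)
    (hg_cont : Continuous fun p : EuclideanSpace ℝ (Fin d) × EuclideanSpace ℝ (Fin d) =>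
      g p.1 p.2)
    (hg_per : ∀ (x y : EuclideanSpace ℝ (Fin d)) (k : Fin d → ℤ),
      g x (y + (WithLp.equiv 2 (Fin d → ℝ)).symm (fun i => (k i : ℝ))) = g x y)
    (K : Set (EuclideanSpace ℝ (Fin d))) (hK : IsCompact K)
    (hg_supp : ∀ x ∉ K, ∀ y, g x y = 0) :
    Tendsto (fun ε : ℝ => ∫ x, g x (ε⁻¹ • x))
      (nhdsWithin 0 (Set.Ioi 0))
      (nhds (∫ x, ∫ y in Set.univ.pi fun _ : Fin d => Set.Icc (0 : ℝ) 1, g x (WithLp.toLp 2 y))) :=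
  stmt2_general d g hg_cont hg_per K hK hg_supp
end

section
/- Let d ≥ 1, let F : ℝ^d × ℝ^d × ℝ → ℝ be continuous and ℤ^d-periodic in its second argument, and let f₁, f₂ : ℝ^d → ℝ be continuous and ℤ^d-periodic. Assume that for every ε > 0 and every open ball B ⊂ ℝ^d one has ∫_B (F(x, x/ε, f₁(x/ε)) − F(x, x/ε, f₂(x/ε))) (f₁(x/ε) − f₂(x/ε)) dx ≥ 0. Then for every x ∈ ℝ^d, ∫_{[0,1]^d} (F(x, y, f₁(y)) − F(x, y, f₂(y))) (f₁(y) − f₂(y)) dy ≥ 0. -/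
/-!
For a continuous `G` that is periodic under a lattice with fundamental cell `D`, and a set `s` of
finite measure, `∫ x in s, G (x / ε) → |s| ⨍_D G` as `ε → 0`. Indeed, averaging the shifted
integrals `∫ x in s, G (x / ε + t)` over `t ∈ D` gives exactly `|s| ∫_D G` (Fubini and
periodicity), while shifting by `t` moves `∫ x in s, G (x / ε)` by at most
`sup ‖G‖ · |s ∆ (s + ε t)|`, which tends to `0`.

Let `H x y = (F(x, y, f₁ y) - F(x, y, f₂ y)) (f₁ y - f₂ y)`. Periodicity in `y` makes
`H x → H x₀` uniformly as `x → x₀`, so on a small ball `B` around `x₀` the hypothesis gives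
`0 ≤ ∫ x in B, H x₀ (x / ε) + δ |B|`; letting `ε → 0` yields `0 ≤ ⨍_D H x₀ + δ`.
-/

open MeasureTheory Filter Topology Set Submodule Function
open scoped symmDiff Pointwise

section SymmDiff

variable {α F : Type*} [MeasurableSpace α] {μ : Measure α} [NormedAddCommGroup F] [NormedSpace ℝ F]

theorem norm_setIntegral_sub_setIntegral_le {f : α → F} {s t : Set α} (hs : MeasurableSet s)
    (ht : MeasurableSet t) (hμs : μ s ≠ ⊤) (hμt : μ t ≠ ⊤) (hfs : IntegrableOn f s μ)
    (hft : IntegrableOn f t μ) {C : ℝ} (hC : ∀ x, ‖f x‖ ≤ C) :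
    ‖∫ x in s, f x ∂μ - ∫ x in t, f x ∂μ‖ ≤ C * μ.real (s ∆ t) := by
  rw [← integral_inter_add_sdiff ht hfs, ← integral_inter_add_sdiff hs hft, inter_comm,
    add_sub_add_left_eq_sub, measureReal_symmDiff_eq hs ht, mul_add]
  exact (norm_sub_le _ _).trans (add_le_add
    (norm_setIntegral_le_of_norm_le_const ((measure_mono sdiff_subset).trans_lt hμs.lt_top)
      fun x _ => hC x)
    (norm_setIntegral_le_of_norm_le_const ((measure_mono sdiff_subset).trans_lt hμt.lt_top)
      fun x _ => hC x))

end SymmDiff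

section Translation

variable {E : Type*} [AddCommGroup E] [TopologicalSpace E] [IsTopologicalAddGroup E]
  [MeasurableSpace E] [BorelSpace E] [R1Space E] {μ : Measure E} [μ.InnerRegularCompactLTTop]
  [IsLocallyFiniteMeasure μ] [μ.IsAddRightInvariant]

theorem tendsto_measure_preimage_add_right_symmDiff {s : Set E} (hs : NullMeasurableSet s μ)
    (hμs : μ s ≠ ⊤) : Tendsto (fun v => μ (((· + v) ⁻¹' s) ∆ s)) (𝓝 0) (𝓝 0) := by
  have hcont : Continuous fun v : E => ContinuousMap.addRight v :=
    ContinuousMap.continuous_of_continuous_uncurry _ (continuous_snd.add continuous_fst)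
  simpa using tendsto_measure_symmDiff_preimage_nhds_zero (hcont.tendsto 0)
    (.of_forall fun v => measurePreserving_add_right μ v) (measurePreserving_add_right μ 0) hs hμs

end Translation

namespace ZSpan

variable {ι E F : Type*} [Fintype ι] [NormedAddCommGroup E] [NormedSpace ℝ E]
  [NormedAddCommGroup F] (b : Module.Basis ι ℝ E)

theorem apply_fract_of_periodic {β : Type*} {G : E → β}
    (hG : ∀ g ∈ span ℤ (range b), Periodic G g) (x : E) : G (fract b x) = G x :=
  (hG _ (floor b x).2).sub_eq x

theorem isCompact_closure_fundamentalDomain : IsCompact (closure (fundamentalDomain b)) :=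
  have := b.finiteDimensional_of_finite
  (fundamentalDomain_isBounded b).isCompact_closure

theorem exists_norm_le_of_periodic {G : E → F} (hGc : Continuous G)
    (hG : ∀ g ∈ span ℤ (range b), Periodic G g) : ∃ C, ∀ x, ‖G x‖ ≤ C := by
  obtain ⟨C, hC⟩ :=
    (isCompact_closure_fundamentalDomain b).exists_bound_of_continuousOn hGc.continuousOn
  exact ⟨C, fun x => apply_fract_of_periodic b hG x ▸
    hC _ (subset_closure (fract_mem_fundamentalDomain b x))⟩

theorem tendstoUniformly_of_periodic {X β : Type*} [TopologicalSpace X] [UniformSpace β]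
    {H : X → E → β} (hH : Continuous (uncurry H))
    (hper : ∀ x, ∀ g ∈ span ℤ (range b), Periodic (H x) g) (x₀ : X) :
    TendstoUniformly H (H x₀) (𝓝 x₀) := by
  intro u hu
  obtain ⟨v, hv, hvu⟩ := (isCompact_closure_fundamentalDomain b).mem_uniformity_of_prod
    hH.continuousOn (mem_univ x₀) (symm_le_uniformity hu)
  rw [nhdsWithin_univ] at hv
  filter_upwards [hv] with x hx y
  rw [← apply_fract_of_periodic b (hper x) y, ← apply_fract_of_periodic b (hper x₀) y]
  exact hvu x hx _ (subset_closure (fract_mem_fundamentalDomain b y))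

variable [MeasurableSpace E] [BorelSpace E] (μ : Measure E) [μ.IsAddHaarMeasure]
  [NormedSpace ℝ F]

theorem setIntegral_fundamentalDomain_add {G : E → F}
    (hG : ∀ g ∈ span ℤ (range b), Periodic G g) (v : E) :
    ∫ y in fundamentalDomain b, G (v + y) ∂μ = ∫ y in fundamentalDomain b, G y ∂μ := by
  have hD := ZSpan.isAddFundamentalDomain' b μ
  have : Countable (span ℤ (range b)).toAddSubgroup :=
    inferInstanceAs (Countable (span ℤ (range b)))
  calc ∫ y in fundamentalDomain b, G (v + y) ∂μ = ∫ y in v +ᵥ fundamentalDomain b, G y ∂μ :=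
        ((measurePreserving_add_left μ v).setIntegral_image_emb
          (measurableEmbedding_addLeft v) G _).symm
    _ = ∫ y in fundamentalDomain b, G y ∂μ :=
        (hD.vadd_of_comm v).setIntegral_eq hD fun g y => by
          rw [AddSubgroup.vadd_def, vadd_eq_add, add_comm]; exact hG g g.2 y

theorem tendsto_setIntegral_comp_inv_smul_add_sub {G : E → F} (hGc : Continuous G)
    (hG : ∀ g ∈ span ℤ (range b), Periodic G g) {s : Set E} (hs : MeasurableSet s)
    (hμs : μ s ≠ ⊤) (t : E) :
    Tendsto (fun ε : ℝ => ∫ x in s, G (ε⁻¹ • x + t) ∂μ - ∫ x in s, G (ε⁻¹ • x) ∂μ)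
      (𝓝[≠] 0) (𝓝 0) := by
  have := b.finiteDimensional_of_finite
  obtain ⟨C, hC⟩ := exists_norm_le_of_periodic b hGc hG
  have hsymm : Tendsto (fun ε : ℝ => μ.real (((· + -(ε • t)) ⁻¹' s) ∆ s)) (𝓝 0) (𝓝 0) := by
    refine (ENNReal.tendsto_toReal ENNReal.zero_ne_top).comp
      ((tendsto_measure_preimage_add_right_symmDiff hs.nullMeasurableSet hμs).comp ?_)
    simpa using (by fun_prop : Continuous fun ε : ℝ => -(ε • t)).tendsto 0
  refine squeeze_zero_norm' ?_ (by simpa using (hsymm.const_mul C).mono_left nhdsWithin_le_nhds)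
  filter_upwards [self_mem_nhdsWithin] with ε hε
  have hint : ∀ {S : Set E}, μ S ≠ ⊤ → IntegrableOn (fun x => G (ε⁻¹ • x)) S μ := fun hS =>
    IntegrableOn.of_bound hS.lt_top (hGc.comp (continuous_const_smul _)).aestronglyMeasurable C
      (ae_of_all _ fun _ => hC _)
  have htrans : ∫ x in s, G (ε⁻¹ • x + t) ∂μ = ∫ x in (· + -(ε • t)) ⁻¹' s, G (ε⁻¹ • x) ∂μ := by
    rw [← (measurePreserving_add_right μ (ε • t)).setIntegral_preimage_emb
      (measurableEmbedding_addRight _) (fun y => G (ε⁻¹ • y))]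
    simp [smul_add, inv_smul_smul₀ hε, preimage_preimage]
  have hμs' : μ ((· + -(ε • t)) ⁻¹' s) ≠ ⊤ := by rwa [measure_preimage_add_right]
  rw [htrans]
  exact norm_setIntegral_sub_setIntegral_le (hs.preimage (measurable_add_const _)) hs hμs' hμs
    (hint hμs') (hint hμs) fun _ => hC _

variable [CompleteSpace F]

theorem setIntegral_fundamentalDomain_setIntegral_add {G : E → F} (hGc : Continuous G)
    (hG : ∀ g ∈ span ℤ (range b), Periodic G g) {φ : E → E} (hφ : Continuous φ) {s : Set E}
    (hμs : μ s ≠ ⊤) :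
    ∫ t in fundamentalDomain b, ∫ x in s, G (φ x + t) ∂μ ∂μ =
      μ.real s • ∫ t in fundamentalDomain b, G t ∂μ := by
  have := b.finiteDimensional_of_finite
  obtain ⟨C, hC⟩ := exists_norm_le_of_periodic b hGc hG
  have : IsFiniteMeasure (μ.restrict s) := isFiniteMeasure_restrict.mpr hμs
  have : IsFiniteMeasure (μ.restrict (fundamentalDomain b)) :=
    isFiniteMeasure_restrict.mpr (fundamentalDomain_isBounded b).measure_lt_top.ne
  have hint : Integrable (uncurry fun t x => G (φ x + t))
      ((μ.restrict (fundamentalDomain b)).prod (μ.restrict s)) :=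
    Integrable.of_bound (hGc.comp (by fun_prop)).aestronglyMeasurable C (ae_of_all _ fun _ => hC _)
  rw [integral_integral_swap hint]
  simp_rw [setIntegral_fundamentalDomain_add b μ hG]
  rw [setIntegral_const]

theorem tendsto_setIntegral_comp_inv_smul {G : E → F} (hGc : Continuous G)
    (hG : ∀ g ∈ span ℤ (range b), Periodic G g) {s : Set E} (hs : MeasurableSet s)
    (hμs : μ s ≠ ⊤) :
    Tendsto (fun ε : ℝ => ∫ x in s, G (ε⁻¹ • x) ∂μ) (𝓝[≠] 0)
      (𝓝 (μ.real s • ⨍ y in fundamentalDomain b, G y ∂μ)) := by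
  have := b.finiteDimensional_of_finite
  set D := fundamentalDomain b
  obtain ⟨C, hC⟩ := exists_norm_le_of_periodic b hGc hG
  have hμD : μ D ≠ ⊤ := (fundamentalDomain_isBounded b).measure_lt_top.ne
  have : IsFiniteMeasure (μ.restrict D) := isFiniteMeasure_restrict.mpr hμD
  have hnorm : ∀ φ : E → E, ‖∫ x in s, G (φ x) ∂μ‖ ≤ C * μ.real s := fun φ =>
    norm_setIntegral_le_of_norm_le_const hμs.lt_top fun _ _ => hC _
  have hshift : ∀ ε : ℝ, Integrable (fun t => ∫ x in s, G (ε⁻¹ • x + t) ∂μ) (μ.restrict D) :=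
    fun ε => Integrable.of_bound
      ((hGc.comp (by fun_prop : Continuous fun p : E × E => ε⁻¹ • p.2 + p.1)).stronglyMeasurable
        |>.integral_prod_right').aestronglyMeasurable _ (ae_of_all _ fun t => hnorm (ε⁻¹ • · + t))
  have havg : ∀ ε : ℝ,
      ∫ t in D, (∫ x in s, G (ε⁻¹ • x + t) ∂μ - ∫ x in s, G (ε⁻¹ • x) ∂μ) ∂μ =
        μ.real s • ∫ t in D, G t ∂μ - μ.real D • ∫ x in s, G (ε⁻¹ • x) ∂μ := fun ε => by
    rw [integral_sub (hshift ε) (integrable_const _), setIntegral_const,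
      setIntegral_fundamentalDomain_setIntegral_add b μ hGc hG (continuous_const_smul ε⁻¹) hμs]
  have hlim : Tendsto (fun ε : ℝ =>
      ∫ t in D, (∫ x in s, G (ε⁻¹ • x + t) ∂μ - ∫ x in s, G (ε⁻¹ • x) ∂μ) ∂μ) (𝓝[≠] 0) (𝓝 0) := by
    simpa using tendsto_integral_filter_of_dominated_convergence (fun _ => 2 * (C * μ.real s))
      (.of_forall fun ε => ((hshift ε).sub (integrable_const _)).aestronglyMeasurable)
      (.of_forall fun ε => ae_of_all _ fun t => (norm_sub_le _ _).trans
        (by linarith [hnorm (ε⁻¹ • · + t), hnorm (ε⁻¹ • ·)]))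
      (integrable_const _)
      (ae_of_all _ (tendsto_setIntegral_comp_inv_smul_add_sub b μ hGc hG hs hμs))
  simp_rw [havg] at hlim
  have hD0 : μ.real D ≠ 0 :=
    ENNReal.toReal_ne_zero.mpr ⟨measure_fundamentalDomain_ne_zero b, hμD⟩
  convert (hlim.const_sub (μ.real s • ∫ t in D, G t ∂μ)).const_smul (μ.real D)⁻¹ using 2
  · simp [smul_smul, inv_mul_cancel₀ hD0]
  · rw [setAverage_eq, smul_comm, sub_zero]

theorem setIntegral_fundamentalDomain_nonneg {H : E → E → ℝ} (hH : Continuous (uncurry H))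
    (hper : ∀ x, ∀ g ∈ span ℤ (range b), Periodic (H x) g)
    (hmono : ∀ ε > (0 : ℝ), ∀ (c : E) (r : ℝ), 0 < r →
      0 ≤ ∫ x in Metric.ball c r, H x (ε⁻¹ • x) ∂μ)
    (x₀ : E) : 0 ≤ ∫ y in fundamentalDomain b, H x₀ y ∂μ := by
  have := b.finiteDimensional_of_finite
  rw [← measure_smul_setAverage _ (fundamentalDomain_isBounded b).measure_lt_top.ne]
  refine smul_nonneg ENNReal.toReal_nonneg (le_of_forall_pos_le_add fun δ hδ => ?_)
  obtain ⟨r, hr, hclose⟩ := Metric.eventually_nhds_iff_ball.mp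
    (Metric.tendstoUniformly_iff.mp (tendstoUniformly_of_periodic b hH hper x₀) δ hδ)
  have hHx₀ : Continuous (H x₀) := hH.comp (Continuous.prodMk_right x₀)
  have hint : ∀ {φ : E → ℝ}, Continuous φ → IntegrableOn φ (Metric.ball x₀ r) μ := fun hφ =>
    (hφ.continuousOn.integrableOn_compact (isCompact_closedBall x₀ r)).mono_set
      Metric.ball_subset_closedBall
  have hle : ∀ ε > (0 : ℝ),
      0 ≤ ∫ x in Metric.ball x₀ r, H x₀ (ε⁻¹ • x) ∂μ + μ.real (Metric.ball x₀ r) * δ := by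
    intro ε hε
    calc 0 ≤ ∫ x in Metric.ball x₀ r, H x (ε⁻¹ • x) ∂μ := hmono ε hε x₀ r hr
      _ ≤ ∫ x in Metric.ball x₀ r, (H x₀ (ε⁻¹ • x) + δ) ∂μ :=
          setIntegral_mono_on (hint (hH.comp (continuous_id.prodMk (continuous_const_smul ε⁻¹))))
            (hint ((hHx₀.comp (continuous_const_smul _)).add continuous_const)) measurableSet_ball
            fun x hx => (sub_lt_iff_lt_add'.mp (abs_sub_lt_iff.mp (hclose x hx (ε⁻¹ • x))).2).le
      _ = _ := by
          rw [integral_add (hint (φ := fun x => H x₀ (ε⁻¹ • x))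
              (hHx₀.comp (continuous_const_smul _))) (hint continuous_const),
            setIntegral_const, smul_eq_mul]
  have hlim := (tendsto_setIntegral_comp_inv_smul b μ hHx₀ (hper x₀)
    (measurableSet_ball (x := x₀) (ε := r)) measure_ball_lt_top.ne).mono_left (nhdsGT_le_nhdsNE 0)
  have hB : 0 < μ.real (Metric.ball x₀ r) :=
    ENNReal.toReal_pos (Metric.measure_ball_pos μ x₀ hr).ne' measure_ball_lt_top.ne
  have hB_mul := ge_of_tendsto (hlim.add_const _) (eventually_nhdsWithin_of_forall hle)
  rw [smul_eq_mul, ← mul_add] at hB_mul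
  exact nonneg_of_mul_nonneg_right hB_mul hB

end ZSpan

namespace EuclideanSpace

variable {ι : Type*} [Fintype ι]

theorem periodic_of_mem_zSpan_basisFun {β : Type*} {G : EuclideanSpace ℝ ι → β}
    (hG : ∀ y (k : ι → ℤ), G (y + (WithLp.equiv 2 (ι → ℝ)).symm (fun i => (k i : ℝ))) = G y) :
    ∀ g ∈ span ℤ (range (basisFun ι ℝ).toBasis), Periodic G g := by
  intro g hg y
  choose k hk using ((basisFun ι ℝ).toBasis.mem_span_iff_repr_mem ℤ g).mp hg
  convert hG y k
  ext i
  simpa using (hk i).symm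

theorem setIntegral_univ_pi_Icc_eq_fundamentalDomain {F : Type*} [NormedAddCommGroup F]
    [NormedSpace ℝ F] (G : EuclideanSpace ℝ ι → F) :
    ∫ y in univ.pi fun _ : ι => Icc (0 : ℝ) 1, G (WithLp.toLp 2 y) =
      ∫ y in ZSpan.fundamentalDomain (basisFun ι ℝ).toBasis, G y := by
  rw [setIntegral_congr_set (ZSpan.fundamentalDomain_ae_parallelepiped _ volume),
    ← (PiLp.volume_preserving_toLp ι).setIntegral_preimage_emb
      (MeasurableEquiv.toLp 2 (ι → ℝ)).measurableEmbedding G]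
  congr
  rw [parallelepiped_basis_eq]
  ext y
  simp [Pi.le_def, forall_and]

end EuclideanSpace

theorem stmt4_general (d : ℕ)
    (F : EuclideanSpace ℝ (Fin d) → EuclideanSpace ℝ (Fin d) → ℝ → ℝ)
    (hF_cont : Continuous
      fun p : EuclideanSpace ℝ (Fin d) × EuclideanSpace ℝ (Fin d) × ℝ => F p.1 p.2.1 p.2.2)
    (hF_per : ∀ (x y : EuclideanSpace ℝ (Fin d)) (m : ℝ) (k : Fin d → ℤ),
      F x (y + (WithLp.equiv 2 (Fin d → ℝ)).symm (fun i => (k i : ℝ))) m = F x y m)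
    (f₁ f₂ : EuclideanSpace ℝ (Fin d) → ℝ)
    (hf₁_cont : Continuous f₁) (hf₂_cont : Continuous f₂)
    (hf₁_per : ∀ (y : EuclideanSpace ℝ (Fin d)) (k : Fin d → ℤ),
      f₁ (y + (WithLp.equiv 2 (Fin d → ℝ)).symm (fun i => (k i : ℝ))) = f₁ y)
    (hf₂_per : ∀ (y : EuclideanSpace ℝ (Fin d)) (k : Fin d → ℤ),
      f₂ (y + (WithLp.equiv 2 (Fin d → ℝ)).symm (fun i => (k i : ℝ))) = f₂ y)
    (hmono : ∀ ε > (0 : ℝ), ∀ (c : EuclideanSpace ℝ (Fin d)) (r : ℝ), 0 < r →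
      0 ≤ ∫ x in Metric.ball c r,
        (F x (ε⁻¹ • x) (f₁ (ε⁻¹ • x)) - F x (ε⁻¹ • x) (f₂ (ε⁻¹ • x)))
          * (f₁ (ε⁻¹ • x) - f₂ (ε⁻¹ • x))) :
    ∀ x : EuclideanSpace ℝ (Fin d),
      0 ≤ ∫ y in Set.univ.pi fun _ : Fin d => Set.Icc (0 : ℝ) 1,
        (F x (WithLp.toLp 2 y) (f₁ (WithLp.toLp 2 y)) - F x (WithLp.toLp 2 y) (f₂ (WithLp.toLp 2 y)))
          * (f₁ (WithLp.toLp 2 y) - f₂ (WithLp.toLp 2 y)) := by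
  intro x₀
  have hFf : ∀ f : EuclideanSpace ℝ (Fin d) → ℝ, Continuous f →
      Continuous fun p : EuclideanSpace ℝ (Fin d) × EuclideanSpace ℝ (Fin d) =>
        F p.1 p.2 (f p.2) :=
    fun f hf => hF_cont.comp
      (continuous_fst.prodMk (continuous_snd.prodMk (hf.comp continuous_snd)))
  rw [EuclideanSpace.setIntegral_univ_pi_Icc_eq_fundamentalDomain
    (fun y => (F x₀ y (f₁ y) - F x₀ y (f₂ y)) * (f₁ y - f₂ y))]
  refine ZSpan.setIntegral_fundamentalDomain_nonneg _ volume
    (H := fun x y => (F x y (f₁ y) - F x y (f₂ y)) * (f₁ y - f₂ y))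
    (((hFf f₁ hf₁_cont).sub (hFf f₂ hf₂_cont)).mul
      ((hf₁_cont.comp continuous_snd).sub (hf₂_cont.comp continuous_snd)))
    (fun x => EuclideanSpace.periodic_of_mem_zSpan_basisFun fun y k => by
      simp only [hF_per, hf₁_per, hf₂_per])
    hmono x₀

/-- necessary cell-monotonicity condition for a local coupling. -/
theorem stmt4 (d : ℕ) (hd : 1 ≤ d)
    (F : EuclideanSpace ℝ (Fin d) → EuclideanSpace ℝ (Fin d) → ℝ → ℝ)
    (hF_cont : Continuous
      fun p : EuclideanSpace ℝ (Fin d) × EuclideanSpace ℝ (Fin d) × ℝ => F p.1 p.2.1 p.2.2)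
    (hF_per : ∀ (x y : EuclideanSpace ℝ (Fin d)) (m : ℝ) (k : Fin d → ℤ),
      F x (y + (WithLp.equiv 2 (Fin d → ℝ)).symm (fun i => (k i : ℝ))) m = F x y m)
    (f₁ f₂ : EuclideanSpace ℝ (Fin d) → ℝ)
    (hf₁_cont : Continuous f₁) (hf₂_cont : Continuous f₂)
    (hf₁_per : ∀ (y : EuclideanSpace ℝ (Fin d)) (k : Fin d → ℤ),
      f₁ (y + (WithLp.equiv 2 (Fin d → ℝ)).symm (fun i => (k i : ℝ))) = f₁ y)
    (hf₂_per : ∀ (y : EuclideanSpace ℝ (Fin d)) (k : Fin d → ℤ),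
      f₂ (y + (WithLp.equiv 2 (Fin d → ℝ)).symm (fun i => (k i : ℝ))) = f₂ y)
    (hmono : ∀ ε > (0 : ℝ), ∀ (c : EuclideanSpace ℝ (Fin d)) (r : ℝ), 0 < r →
      0 ≤ ∫ x in Metric.ball c r,
        (F x (ε⁻¹ • x) (f₁ (ε⁻¹ • x)) - F x (ε⁻¹ • x) (f₂ (ε⁻¹ • x)))
          * (f₁ (ε⁻¹ • x) - f₂ (ε⁻¹ • x))) :
    ∀ x : EuclideanSpace ℝ (Fin d),
      0 ≤ ∫ y in Set.univ.pi fun _ : Fin d => Set.Icc (0 : ℝ) 1,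
        (F x (WithLp.toLp 2 y) (f₁ (WithLp.toLp 2 y)) - F x (WithLp.toLp 2 y) (f₂ (WithLp.toLp 2 y)))
          * (f₁ (WithLp.toLp 2 y) - f₂ (WithLp.toLp 2 y)) :=
  stmt4_general d F hF_cont hF_per f₁ f₂ hf₁_cont hf₂_cont hf₁_per hf₂_per hmono
end

section
/- Let d ≥ 1 and let F : ℝ^d × ℝ → ℝ be continuous. Assume that for all continuous compactly supported f₁, f₂ : ℝ^d → ℝ one has ∫_{ℝ^d} (F(x, f₁(x)) − F(x, f₂(x)))(f₁(x) − f₂(x)) dx ≥ 0. Then the same inequality ∫_{ℝ^d} (F(x, f₁(x)) − F(x, f₂(x)))(f₁(x) − f₂(x)) dx ≥ 0 holds for all bounded Lebesgue-measurable compactly supported f₁, f₂ : ℝ^d → ℝ. -/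
/-!
Approximate each `fᵢ` in `L¹` by continuous compactly supported functions and pass to an a.e.
convergent subsequence. Composing with a cutoff that equals `1` on the support of `fᵢ` and with
the truncation to `[-C, C]` keeps a.e. convergence, and makes the approximants uniformly bounded
and supported in a fixed compact set. On that compact set times `[-C, C]²` the pairing is bounded,
so dominated convergence passes the inequality to the limit.
-/

open MeasureTheory Filter Topology Set Function
open scoped ENNReal

section Approximation

variable {X : Type*} [TopologicalSpace X] [MeasurableSpace X] [BorelSpace X] {μ : Measure X}

theorem MeasureTheory.MemLp.exists_seq_continuous_tendsto_ae [NormalSpace X] [R1Space X]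
    [WeaklyLocallyCompactSpace X] [μ.Regular] {E : Type*} [NormedAddCommGroup E]
    [NormedSpace ℝ E] {p : ℝ≥0∞} (hp₀ : p ≠ 0) (hp : p ≠ ∞) {f : X → E} (hf : MemLp f p μ) :
    ∃ g : ℕ → X → E, (∀ n, Continuous (g n)) ∧
      ∀ᵐ x ∂μ, Tendsto (fun n => g n x) atTop (𝓝 (f x)) := by
  choose g _ hgf hgc hgp using fun n : ℕ =>
    hf.exists_hasCompactSupport_eLpNorm_sub_le hp
      (ENNReal.inv_ne_zero.2 (ENNReal.natCast_ne_top n))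
  have hconv : TendstoInMeasure μ g atTop f := by
    refine tendstoInMeasure_of_tendsto_eLpNorm hp₀ (fun n => (hgp n).aestronglyMeasurable)
      hf.aestronglyMeasurable ?_
    refine tendsto_of_tendsto_of_tendsto_of_le_of_le tendsto_const_nhds
      ENNReal.tendsto_inv_nat_nhds_zero (fun _ => zero_le) fun n => ?_
    simpa only [eLpNorm_sub_comm] using hgf n
  obtain ⟨ns, -, hns⟩ := hconv.exists_seq_tendsto_ae
  exact ⟨fun i => g (ns i), fun i => hgc (ns i), hns⟩

theorem exists_seq_continuous_bounded_tendsto_ae [NormalSpace X] [R1Space X]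
    [LocallyCompactSpace X] [μ.Regular] {f : X → ℝ} (hf : AEStronglyMeasurable f μ) {C : ℝ}
    (hC : ∀ x, |f x| ≤ C) (hfc : HasCompactSupport f) :
    ∃ K, IsCompact K ∧ ∃ g : ℕ → X → ℝ, (∀ n, Continuous (g n)) ∧
      (∀ n, tsupport (g n) ⊆ K) ∧ (∀ n x, |g n x| ≤ C) ∧
      ∀ᵐ x ∂μ, Tendsto (fun n => g n x) atTop (𝓝 (f x)) := by
  obtain ⟨χ, hχf, -, hχc, hχ01⟩ :=
    exists_continuous_one_zero_of_isCompact hfc isClosed_empty (disjoint_empty _)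
  obtain ⟨g, hgc, hg⟩ := (hfc.memLp_of_bound (p := 1) hf C (.of_forall hC))
    |>.exists_seq_continuous_tendsto_ae one_ne_zero ENNReal.one_ne_top
  refine ⟨tsupport χ, hχc, fun n x => χ x * max (-C) (min C (g n x)),
    fun n => by fun_prop, fun n => tsupport_mul_subset_left, fun n x => ?_, ?_⟩
  · have hC₀ : 0 ≤ C := (abs_nonneg _).trans (hC x)
    have hχ : |χ x| ≤ 1 := abs_le.2 ⟨by linarith [(hχ01 x).1], (hχ01 x).2⟩
    have htrunc : |max (-C) (min C (g n x))| ≤ C :=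
      abs_le.2 ⟨le_max_left _ _, max_le (by linarith) (min_le_left _ _)⟩
    rw [abs_mul]
    exact (mul_le_of_le_one_left (abs_nonneg _) hχ).trans htrunc
  · filter_upwards [hg] with x hx
    have hfx : f x = χ x * max (-C) (min C (f x)) := by
      obtain ⟨hlo, hhi⟩ := abs_le.1 (hC x)
      rw [min_eq_right hhi, max_eq_right hlo]
      by_cases hx : x ∈ tsupport f
      · rw [hχf hx, Pi.one_apply, one_mul]
      · rw [image_eq_zero_of_notMem_tsupport hx, mul_zero]
    rw [hfx]
    have htrunc : Continuous fun t : ℝ => max (-C) (min C t) := by fun_prop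
    exact tendsto_const_nhds.mul ((htrunc.tendsto _).comp hx)

end Approximation

theorem tendsto_integral_comp_of_tendsto_ae {X E : Type*} [TopologicalSpace X] [R1Space X]
    [MeasurableSpace X] [OpensMeasurableSpace X] {μ : Measure X} [IsFiniteMeasureOnCompacts μ]
    [NormedAddCommGroup E] [ProperSpace E] {Φ : X × E → ℝ} (hΦ : Continuous Φ)
    (hΦ₀ : ∀ x, Φ (x, 0) = 0) {K : Set X} (hK : IsCompact K) {C : ℝ} {g : ℕ → X → E}
    {f : X → E} (hgc : ∀ n, Continuous (g n)) (hgK : ∀ n, support (g n) ⊆ K)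
    (hgC : ∀ n x, ‖g n x‖ ≤ C)
    (hgf : ∀ᵐ x ∂μ, Tendsto (fun n => g n x) atTop (𝓝 (f x))) :
    Tendsto (fun n => ∫ x, Φ (x, g n x) ∂μ) atTop (𝓝 (∫ x, Φ (x, f x) ∂μ)) := by
  obtain ⟨M, hM⟩ :=
    (hK.closure.prod (isCompact_closedBall 0 C)).exists_bound_of_continuousOn hΦ.continuousOn
  refine tendsto_integral_of_dominated_convergence ((closure K).indicator fun _ => M)
    (fun n => (hΦ.comp (continuous_id.prodMk (hgc n))).aestronglyMeasurable)
    ((integrableOn_const hK.closure.measure_lt_top.ne).integrable_indicator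
      isClosed_closure.measurableSet) (fun n => .of_forall fun x => ?_) ?_
  · by_cases hx : x ∈ closure K
    · rw [indicator_of_mem hx]
      exact hM _ ⟨hx, mem_closedBall_zero_iff.2 (hgC n x)⟩
    · rw [indicator_of_notMem hx, notMem_support.1 fun h => hx (subset_closure (hgK n h)), hΦ₀,
        norm_zero]
  · filter_upwards [hgf] with x hx
    exact (hΦ.tendsto _).comp (tendsto_const_nhds.prodMk_nhds hx)

theorem stmt8_general (d : ℕ)
    (F : EuclideanSpace ℝ (Fin d) → ℝ → ℝ)
    (hF_cont : Continuous fun p : EuclideanSpace ℝ (Fin d) × ℝ => F p.1 p.2)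
    (hmono : ∀ f₁ f₂ : EuclideanSpace ℝ (Fin d) → ℝ,
      Continuous f₁ → Continuous f₂ → HasCompactSupport f₁ → HasCompactSupport f₂ →
      0 ≤ ∫ x, (F x (f₁ x) - F x (f₂ x)) * (f₁ x - f₂ x)) :
    ∀ f₁ f₂ : EuclideanSpace ℝ (Fin d) → ℝ,
      Measurable f₁ → Measurable f₂ →
      (∃ C : ℝ, ∀ x, |f₁ x| ≤ C) → (∃ C : ℝ, ∀ x, |f₂ x| ≤ C) →
      HasCompactSupport f₁ → HasCompactSupport f₂ →
      0 ≤ ∫ x, (F x (f₁ x) - F x (f₂ x)) * (f₁ x - f₂ x) := by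
  rintro f₁ f₂ hm₁ hm₂ ⟨C₁, hC₁⟩ ⟨C₂, hC₂⟩ hcs₁ hcs₂
  obtain ⟨K₁, hK₁, g₁, hg₁c, hg₁K, hg₁C, hg₁⟩ :=
    exists_seq_continuous_bounded_tendsto_ae (μ := volume) hm₁.aestronglyMeasurable hC₁ hcs₁
  obtain ⟨K₂, hK₂, g₂, hg₂c, hg₂K, hg₂C, hg₂⟩ :=
    exists_seq_continuous_bounded_tendsto_ae (μ := volume) hm₂.aestronglyMeasurable hC₂ hcs₂
  have hlim := tendsto_integral_comp_of_tendsto_ae (μ := volume)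
    (Φ := fun p => (F p.1 p.2.1 - F p.1 p.2.2) * (p.2.1 - p.2.2)) (by fun_prop) (by simp)
    (hK₁.union hK₂) (g := fun n x => (g₁ n x, g₂ n x)) (C := max C₁ C₂)
    (fun n => (hg₁c n).prodMk (hg₂c n))
    (fun n => by
      rw [support_prodMk]
      exact union_subset_union (subset_tsupport _ |>.trans (hg₁K n))
        (subset_tsupport _ |>.trans (hg₂K n)))
    (fun n x => max_le_max (hg₁C n x) (hg₂C n x))
    (by filter_upwards [hg₁, hg₂] with x h₁ h₂ using h₁.prodMk_nhds h₂)
  exact ge_of_tendsto' hlim fun n => hmono _ _ (hg₁c n) (hg₂c n)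
    (hK₁.of_isClosed_subset (isClosed_tsupport _) (hg₁K n))
    (hK₂.of_isClosed_subset (isClosed_tsupport _) (hg₂K n))

/-- monotonicity of a local coupling extends from continuous compactly
supported functions to bounded measurable compactly supported ones. -/
theorem stmt8 (d : ℕ) (hd : 1 ≤ d)
    (F : EuclideanSpace ℝ (Fin d) → ℝ → ℝ)
    (hF_cont : Continuous fun p : EuclideanSpace ℝ (Fin d) × ℝ => F p.1 p.2)
    (hmono : ∀ f₁ f₂ : EuclideanSpace ℝ (Fin d) → ℝ,
      Continuous f₁ → Continuous f₂ → HasCompactSupport f₁ → HasCompactSupport f₂ →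
      0 ≤ ∫ x, (F x (f₁ x) - F x (f₂ x)) * (f₁ x - f₂ x)) :
    ∀ f₁ f₂ : EuclideanSpace ℝ (Fin d) → ℝ,
      Measurable f₁ → Measurable f₂ →
      (∃ C : ℝ, ∀ x, |f₁ x| ≤ C) → (∃ C : ℝ, ∀ x, |f₂ x| ≤ C) →
      HasCompactSupport f₁ → HasCompactSupport f₂ →
      0 ≤ ∫ x, (F x (f₁ x) - F x (f₂ x)) * (f₁ x - f₂ x) :=
  stmt8_general d F hF_cont hmono
end

section
/- Let d ≥ 1 and let H : ℝ^d × ℝ^d → ℝ be continuous. Suppose v₁, v₂ : ℝ^d → ℝ are C² and ℤ^d-periodic, and λ₁, λ₂ ∈ ℝ satisfy −Δv_i(y) + H(Dv_i(y), y) = λ_i for all y ∈ ℝ^d and i = 1, 2. Then λ₁ = λ₂. -/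
/-!
At a maximum point `a` of the periodic function `v₁ - v₂`, which exists by compactness of the
torus, the gradients of `v₁` and `v₂` agree and `Δ v₁ a ≤ Δ v₂ a`. Subtracting the two cell
equations at `a` leaves `λ₁ - λ₂ = Δ v₂ a - Δ v₁ a ≥ 0`, and exchanging the roles gives equality.
-/

open MeasureTheory

/-- The Laplacian of a function on `ℝ^d`, written in coordinates. -/
noncomputable def lap {d : ℕ} (f : EuclideanSpace ℝ (Fin d) → ℝ)
    (x : EuclideanSpace ℝ (Fin d)) : ℝ :=
  ∑ i : Fin d, fderiv ℝ (fun y => fderiv ℝ f y (EuclideanSpace.single i 1)) x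
    (EuclideanSpace.single i 1)

open Filter Topology Set

theorem IsLocalMax.deriv_deriv_nonpos {f : ℝ → ℝ} {a : ℝ} (hmax : IsLocalMax f a)
    (hc : ContinuousAt f a) : deriv (deriv f) a ≤ 0 := by
  by_contra! hpos
  -- a strict second-derivative sign would make `a` also a local minimum, so `f` is locally constant
  have hmin : IsLocalMin f a := isLocalMin_of_deriv_deriv_pos hpos hmax.deriv_eq_zero hc
  have hconst : f =ᶠ[𝓝 a] fun _ => f a :=
    (hmax.and hmin).mono fun _ hx => le_antisymm hx.1 hx.2
  have hzero : deriv (deriv f) a = 0 := by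
    rw [hconst.deriv.deriv_eq]
    simp
  exact hpos.ne' hzero

theorem IsLocalMax.fderiv_fderiv_apply_nonpos {E : Type*} [NormedAddCommGroup E]
    [NormedSpace ℝ E] {f : E → ℝ} {a : E} (hmax : IsLocalMax f a) (e : E)
    (hf : Differentiable ℝ f) (hf' : DifferentiableAt ℝ (fun y => fderiv ℝ f y e) a) :
    fderiv ℝ (fun y => fderiv ℝ f y e) a e ≤ 0 := by
  set line : ℝ → E := fun t => a + t • e
  have hline : ∀ t, HasDerivAt line e t := fun t => by
    simpa [line] using ((hasDerivAt_id t).smul_const e).const_add a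
  have hline0 : line 0 = a := by simp [line]
  have hfirst : deriv (f ∘ line) = fun t => fderiv ℝ f (line t) e :=
    funext fun t => ((hf _).hasFDerivAt.comp_hasDerivAt t (hline t)).deriv
  have hsecond : deriv (fun t => fderiv ℝ f (line t) e) 0 =
      fderiv ℝ (fun y => fderiv ℝ f y e) a e :=
    (hf'.hasFDerivAt.comp_hasDerivAt_of_eq 0 (hline 0) hline0.symm).deriv
  have hline_max : IsLocalMax (f ∘ line) 0 :=
    (hline0 ▸ hmax).comp_continuous (hline 0).continuousAt
  have := hline_max.deriv_deriv_nonpos (hf.continuous.continuousAt.comp (hline 0).continuousAt)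
  rwa [hfirst, hsecond] at this

theorem IsLocalMax.lap_nonpos {d : ℕ} {f : EuclideanSpace ℝ (Fin d) → ℝ}
    {a : EuclideanSpace ℝ (Fin d)} (hmax : IsLocalMax f a) (hf : ContDiff ℝ 2 f) :
    lap f a ≤ 0 :=
  Finset.sum_nonpos fun _ _ => hmax.fderiv_fderiv_apply_nonpos _ (hf.differentiable two_ne_zero)
    (((hf.fderiv_right le_rfl).clm_apply contDiff_const).differentiable one_ne_zero a)

theorem lap_sub {d : ℕ} {f g : EuclideanSpace ℝ (Fin d) → ℝ} (hf : ContDiff ℝ 2 f)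
    (hg : ContDiff ℝ 2 g) (x : EuclideanSpace ℝ (Fin d)) :
    lap (f - g) x = lap f x - lap g x := by
  rw [lap, lap, lap, ← Finset.sum_sub_distrib]
  refine Finset.sum_congr rfl fun i _ => ?_
  set e := EuclideanSpace.single i (1 : ℝ)
  have hpartial : ∀ u : EuclideanSpace ℝ (Fin d) → ℝ, ContDiff ℝ 2 u →
      Differentiable ℝ (fun y => fderiv ℝ u y e) := fun u hu =>
    ((hu.fderiv_right le_rfl).clm_apply contDiff_const).differentiable one_ne_zero
  have hsub : (fun y => fderiv ℝ (f - g) y e) =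
      (fun y => fderiv ℝ f y e) - (fun y => fderiv ℝ g y e) := by
    funext y
    rw [fderiv_sub (hf.differentiable two_ne_zero y) (hg.differentiable two_ne_zero y)]
    rfl
  rw [hsub, fderiv_sub (hpartial f hf x) (hpartial g hg x)]
  rfl

theorem gradient_eq_of_isLocalMax_sub {E : Type*} [NormedAddCommGroup E] [InnerProductSpace ℝ E]
    [CompleteSpace E] {f g : E → ℝ} {a : E} (hf : DifferentiableAt ℝ f a)
    (hg : DifferentiableAt ℝ g a) (hmax : IsLocalMax (f - g) a) :
    gradient f a = gradient g a := by
  rw [gradient, gradient, sub_eq_zero.mp ((fderiv_sub hf hg).symm.trans hmax.fderiv_eq_zero)]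

theorem Continuous.exists_forall_ge_of_intPeriodic {ι : Type*} [Fintype ι] {β : Type*}
    [LinearOrder β] [TopologicalSpace β] [ClosedIciTopology β] {f : EuclideanSpace ℝ ι → β}
    (hf : Continuous f)
    (hper : ∀ (y : EuclideanSpace ℝ ι) (k : ι → ℤ),
      f (y + (WithLp.equiv 2 (ι → ℝ)).symm (fun i => (k i : ℝ))) = f y) :
    ∃ a, ∀ y, f y ≤ f a := by
  set cube : Set (EuclideanSpace ℝ ι) := (WithLp.equiv 2 (ι → ℝ)).symm '' Icc 0 1
  have hcube : IsCompact cube := isCompact_Icc.image (PiLp.continuous_toLp 2 _)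
  obtain ⟨a, -, ha⟩ := hcube.exists_isMaxOn ⟨_, 0, left_mem_Icc.mpr zero_le_one, rfl⟩
    hf.continuousOn
  refine ⟨a, fun y => ?_⟩
  -- `y` is the translate of a point of the cube by the integer vector of coordinate floors
  set x : ι → ℝ := fun i => Int.fract (y i)
  have hy : y = (WithLp.equiv 2 (ι → ℝ)).symm x +
      (WithLp.equiv 2 (ι → ℝ)).symm (fun i => ((⌊y i⌋ : ℤ) : ℝ)) := by
    ext i
    simp [x, Int.fract_add_floor]
  rw [hy, hper]
  exact ha ⟨x, ⟨fun _ => Int.fract_nonneg _, fun _ => (Int.fract_lt_one _).le⟩, rfl⟩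

theorem le_of_isLocalMax_sub {d : ℕ}
    {H : EuclideanSpace ℝ (Fin d) → EuclideanSpace ℝ (Fin d) → ℝ}
    {v₁ v₂ : EuclideanSpace ℝ (Fin d) → ℝ} {lam₁ lam₂ : ℝ} {a : EuclideanSpace ℝ (Fin d)}
    (hv₁ : ContDiff ℝ 2 v₁) (hv₂ : ContDiff ℝ 2 v₂) (hmax : IsLocalMax (v₁ - v₂) a)
    (heq₁ : -lap v₁ a + H (gradient v₁ a) a = lam₁)
    (heq₂ : -lap v₂ a + H (gradient v₂ a) a = lam₂) :
    lam₂ ≤ lam₁ := by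
  have hgrad := gradient_eq_of_isLocalMax_sub (hv₁.differentiable two_ne_zero a)
    (hv₂.differentiable two_ne_zero a) hmax
  have hlap := hmax.lap_nonpos (hv₁.sub hv₂)
  rw [lap_sub hv₁ hv₂] at hlap
  rw [hgrad] at heq₁
  linarith

theorem ergodicConstant_le {d : ℕ}
    {H : EuclideanSpace ℝ (Fin d) → EuclideanSpace ℝ (Fin d) → ℝ}
    {v₁ v₂ : EuclideanSpace ℝ (Fin d) → ℝ} {lam₁ lam₂ : ℝ}
    (hv₁ : ContDiff ℝ 2 v₁) (hv₂ : ContDiff ℝ 2 v₂)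
    (hv₁_per : ∀ (y : EuclideanSpace ℝ (Fin d)) (k : Fin d → ℤ),
      v₁ (y + (WithLp.equiv 2 (Fin d → ℝ)).symm (fun i => (k i : ℝ))) = v₁ y)
    (hv₂_per : ∀ (y : EuclideanSpace ℝ (Fin d)) (k : Fin d → ℤ),
      v₂ (y + (WithLp.equiv 2 (Fin d → ℝ)).symm (fun i => (k i : ℝ))) = v₂ y)
    (heq₁ : ∀ y, -lap v₁ y + H (gradient v₁ y) y = lam₁)
    (heq₂ : ∀ y, -lap v₂ y + H (gradient v₂ y) y = lam₂) :
    lam₂ ≤ lam₁ := by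
  obtain ⟨a, ha⟩ := (hv₁.sub hv₂).continuous.exists_forall_ge_of_intPeriodic fun y k => by
    simp only [hv₁_per, hv₂_per]
  exact le_of_isLocalMax_sub hv₁ hv₂ (Eventually.of_forall ha) (heq₁ a) (heq₂ a)

theorem stmt13_general (d : ℕ)
    (H : EuclideanSpace ℝ (Fin d) → EuclideanSpace ℝ (Fin d) → ℝ)
    (v₁ v₂ : EuclideanSpace ℝ (Fin d) → ℝ) (lam₁ lam₂ : ℝ)
    (hv₁ : ContDiff ℝ 2 v₁) (hv₂ : ContDiff ℝ 2 v₂)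
    (hv₁_per : ∀ (y : EuclideanSpace ℝ (Fin d)) (k : Fin d → ℤ),
      v₁ (y + (WithLp.equiv 2 (Fin d → ℝ)).symm (fun i => (k i : ℝ))) = v₁ y)
    (hv₂_per : ∀ (y : EuclideanSpace ℝ (Fin d)) (k : Fin d → ℤ),
      v₂ (y + (WithLp.equiv 2 (Fin d → ℝ)).symm (fun i => (k i : ℝ))) = v₂ y)
    (heq₁ : ∀ y, -lap v₁ y + H (gradient v₁ y) y = lam₁)
    (heq₂ : ∀ y, -lap v₂ y + H (gradient v₂ y) y = lam₂) :
    lam₁ = lam₂ :=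
  le_antisymm (ergodicConstant_le hv₂ hv₁ hv₂_per hv₁_per heq₂ heq₁)
    (ergodicConstant_le hv₁ hv₂ hv₁_per hv₂_per heq₁ heq₂)

/-- uniqueness of the ergodic constant in the cell problem
`−Δv + H(Dv, y) = λ` with `ℤ^d`-periodic `v`. -/
theorem stmt13 (d : ℕ) (hd : 1 ≤ d)
    (H : EuclideanSpace ℝ (Fin d) → EuclideanSpace ℝ (Fin d) → ℝ)
    (hH : Continuous fun p : EuclideanSpace ℝ (Fin d) × EuclideanSpace ℝ (Fin d) =>
      H p.1 p.2)
    (v₁ v₂ : EuclideanSpace ℝ (Fin d) → ℝ) (lam₁ lam₂ : ℝ)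
    (hv₁ : ContDiff ℝ 2 v₁) (hv₂ : ContDiff ℝ 2 v₂)
    (hv₁_per : ∀ (y : EuclideanSpace ℝ (Fin d)) (k : Fin d → ℤ),
      v₁ (y + (WithLp.equiv 2 (Fin d → ℝ)).symm (fun i => (k i : ℝ))) = v₁ y)
    (hv₂_per : ∀ (y : EuclideanSpace ℝ (Fin d)) (k : Fin d → ℤ),
      v₂ (y + (WithLp.equiv 2 (Fin d → ℝ)).symm (fun i => (k i : ℝ))) = v₂ y)
    (heq₁ : ∀ y, -lap v₁ y + H (gradient v₁ y) y = lam₁)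
    (heq₂ : ∀ y, -lap v₂ y + H (gradient v₂ y) y = lam₂) :
    lam₁ = lam₂ :=
  stmt13_general d H v₁ v₂ lam₁ lam₂ hv₁ hv₂ hv₁_per hv₂_per heq₁ heq₂
end
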